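/- arXiv:1910.06270 — 5 statements merged into one kernel-verified Lean document; each statement's English description precedes it below -/
import Mathlib

section
/- Let q be an odd prime and n < ℓ. Let S be an (ℓ−n) × n matrix over ZMod q, R₁ an invertible n × n matrix over ZMod q, R₂ any (ℓ−n) × n matrix over ZMod q, and let R be the ℓ × ℓ block matrix with blocks R₁ (top-left), 0 (top-right), R₂ (bottom-left), and the identity I_{ℓ−n} (bottom-right). Then R is invertible, and, setting S_enc := [I_n | −Sᵀ] (an n × ℓ matrix) and S_dec := R⁻¹ · [S | I_{ℓ−n}]ᵀ (an ℓ × (ℓ−n) matrix), for all row vectors m, ẽ ∈ (ZMod q)^{ℓ−n} and y ∈ (ZMod q)^n, with p := (0, m) ∈ (ZMod q)^ℓ and e := (0, ẽ) ∈ (ZMod q)^ℓ, the ciphertext c := (p · ⌊q/2⌋ + y · S_enc + e) · R satisfies c · S_dec = m · ⌊q/2⌋ + ẽ in (ZMod q)^{ℓ−n}. -/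
open Matrix

/-- Correctness of decryption for the basic scheme: with `R` the invertible block matrix
built from `R₁, R₂`, `S_enc = [I_n | -Sᵀ]` and `S_dec = R⁻¹ [S | I]ᵀ`, any ciphertext
`c = (p ⌊q/2⌋ + y S_enc + e) R` with `p = (0, m)` and `e = (0, etld)` satisfies
`c ⬝ S_dec = m ⌊q/2⌋ + etld`. -/
theorem stmt_5 (q : ℕ) (hq : q.Prime) [Fact q.Prime] (hodd : Odd q)
    (n ℓ : ℕ) (hnℓ : n < ℓ)
    (S : Matrix (Fin (ℓ - n)) (Fin n) (ZMod q))
    (R₁ : Matrix (Fin n) (Fin n) (ZMod q)) (hR₁ : IsUnit R₁)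
    (R₂ : Matrix (Fin (ℓ - n)) (Fin n) (ZMod q))
    (R : Matrix (Fin n ⊕ Fin (ℓ - n)) (Fin n ⊕ Fin (ℓ - n)) (ZMod q))
    (hR : R = Matrix.fromBlocks R₁ 0 R₂ 1)
    (Senc : Matrix (Fin n) (Fin n ⊕ Fin (ℓ - n)) (ZMod q))
    (hSenc : Senc = Matrix.fromCols (1 : Matrix (Fin n) (Fin n) (ZMod q)) (-(S.transpose)))
    (Sdec : Matrix (Fin n ⊕ Fin (ℓ - n)) (Fin (ℓ - n)) (ZMod q))
    (hSdec : Sdec = R⁻¹ *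
      (Matrix.fromCols S (1 : Matrix (Fin (ℓ - n)) (Fin (ℓ - n)) (ZMod q))).transpose) :
    IsUnit R ∧
    ∀ (m etld : Fin (ℓ - n) → ZMod q) (y : Fin n → ZMod q),
      Matrix.vecMul
        (Matrix.vecMul
          (((q / 2 : ℕ) : ZMod q) • Sum.elim (0 : Fin n → ZMod q) m +
            Matrix.vecMul y Senc + Sum.elim (0 : Fin n → ZMod q) etld) R) Sdec =
      ((q / 2 : ℕ) : ZMod q) • m + etld := by
  have hRu : IsUnit R := by
    rw [hR, Matrix.isUnit_iff_isUnit_det, Matrix.det_fromBlocks_zero₁₂, Matrix.det_one, mul_one]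
    exact (Matrix.isUnit_iff_isUnit_det R₁).mp hR₁
  refine ⟨hRu, ?_⟩
  intro m etld y
  have key : ∀ v : Fin n ⊕ Fin (ℓ - n) → ZMod q,
      Matrix.vecMul (Matrix.vecMul v R) Sdec =
      Matrix.vecMul v (Matrix.fromCols S (1 : Matrix (Fin (ℓ - n)) (Fin (ℓ - n)) (ZMod q))).transpose := by
    intro v
    rw [hSdec, Matrix.vecMul_vecMul, ← Matrix.mul_assoc, Matrix.mul_nonsing_inv _
      ((Matrix.isUnit_iff_isUnit_det R).mp hRu), Matrix.one_mul]
  rw [key]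
  rw [Matrix.transpose_fromCols, Matrix.transpose_one, hSenc,
    Matrix.vecMul_fromCols]
  have helim : (((q / 2 : ℕ) : ZMod q) • Sum.elim (0 : Fin n → ZMod q) m +
      Sum.elim (Matrix.vecMul y 1) (Matrix.vecMul y (-S.transpose)) + Sum.elim (0 : Fin n → ZMod q) etld)
      = Sum.elim (Matrix.vecMul y 1) (((q / 2 : ℕ) : ZMod q) • m + Matrix.vecMul y (-S.transpose) + etld) := by
    funext i
    cases i <;> simp [Matrix.vecMul]
  rw [helim, Matrix.sumElim_vecMul_fromRows]
  simp [Matrix.vecMul_neg, Matrix.vecMul_one, Matrix.vecMul_transpose]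
  abel
end

section
/- Let q be an odd prime with q ≥ 7, let m ∈ {0,1}, and let e be an integer with |e| < ⌊q/2⌋ / 2. Let a be the centered representative in the interval (−q/2, q/2] of the element m·⌊q/2⌋ + e of ZMod q. Then rounding a / ⌊q/2⌋ to the nearest integer and reducing modulo 2 recovers m; i.e., ⌊a/⌊q/2⌋⌉ ≡ m (mod 2). -/
/-!
Write `q = 2k + 1`. Since `2|e| < k`, the centered representative of `m k + e` is `m k + e`
itself unless `m = 1` and `e > 0`, where it wraps around to `k + e - q = -k + (e - 1)`. In
every case it has the form `r k + d` with `r ≡ m [ZMOD 2]` and `2|d| < k`, and rounding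
`(r k + d) / k` gives `r`.
-/

theorem round_intCast_mul_add_div {α : Type*} [Field α] [LinearOrder α] [IsStrictOrderedRing α]
    [FloorRing α] (r d : ℤ) {k : α} (hd : 2 * |(d : α)| < k) :
    round (((r : α) * k + d) / k) = r := by
  have hk : 0 < k := lt_of_le_of_lt (by positivity) hd
  have hsplit : ((r : α) * k + d) / k = d / k + r := by field_simp; ring
  have hround : round ((d : α) / k) = 0 := by
    rw [round_eq_zero_iff, Set.mem_Ico, le_div_iff₀ hk, div_lt_iff₀ hk]
    constructor <;> linarith [neg_abs_le (d : α), le_abs_self (d : α)]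
  rw [hsplit, round_add_intCast, hround, zero_add]

theorem exists_valMinAbs_mul_add_eq (k : ℕ) (m e : ℤ) (hm : m = 0 ∨ m = 1)
    (he : 2 * |e| < k) :
    ∃ r d : ℤ, r ≡ m [ZMOD 2] ∧ 2 * |d| < k ∧
      ((m : ZMod (2 * k + 1)) * (k : ZMod (2 * k + 1)) + e).valMinAbs = r * k + d := by
  have hq : ((2 * k + 1 : ℕ) : ZMod (2 * k + 1)) = 0 := ZMod.natCast_self _
  push_cast at hq
  have he_bounds : -(k : ℤ) < 2 * e ∧ 2 * e < k := by
    constructor <;> linarith [neg_abs_le e, le_abs_self e]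
  by_cases hwrap : m = 1 ∧ 0 < e
  · obtain ⟨rfl, he0⟩ := hwrap
    rw [abs_of_pos he0] at he
    refine ⟨-1, e - 1, by decide, by rw [abs_of_nonneg (by omega)]; omega, ?_⟩
    rw [ZMod.valMinAbs_spec]
    refine ⟨by push_cast; linear_combination hq, ?_, ?_⟩ <;> push_cast <;> omega
  · refine ⟨m, e, Int.ModEq.refl m, he, ?_⟩
    rw [ZMod.valMinAbs_spec]
    refine ⟨by push_cast; ring, ?_, ?_⟩ <;> push_cast <;> rcases hm with rfl | rfl <;> omega

theorem stmt_6_general (q : ℕ) (hodd : Odd q)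
    (m : ℤ) (hm : m = 0 ∨ m = 1)
    (e : ℤ) (he : (|e| : ℚ) < ((q / 2 : ℕ) : ℚ) / 2)
    (a : ℤ) (ha : a = ((m : ZMod q) * ((q / 2 : ℕ) : ZMod q) + (e : ZMod q)).valMinAbs) :
    round ((a : ℚ) / ((q / 2 : ℕ) : ℚ)) ≡ m [ZMOD 2] := by
  obtain ⟨k, rfl⟩ := hodd
  have hk : (2 * k + 1) / 2 = k := by omega
  rw [hk] at he ha ⊢
  have he' : 2 * |e| < k := by exact_mod_cast (by push_cast; linarith : ((2 * |e| : ℤ) : ℚ) < k)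
  obtain ⟨r, d, hr, hd, hrd⟩ := exists_valMinAbs_mul_add_eq k m e hm he'
  have hd' : 2 * |(d : ℚ)| < k := by exact_mod_cast hd
  rw [ha, hrd, Int.cast_add, Int.cast_mul, Int.cast_natCast, round_intCast_mul_add_div r d hd']
  exact hr

/-- Correctness of single-bit decryption rounding: for an odd prime `q ≥ 7`, a bit `m` and an
integer noise `e` with `|e| < ⌊q/2⌋ / 2`, if `a` is the centered representative of
`m·⌊q/2⌋ + e` in `ZMod q`, then rounding `a / ⌊q/2⌋` to the nearest integer recovers
`m` modulo 2. -/
theorem stmt_6 (q : ℕ) (hq : q.Prime) [Fact q.Prime] (hodd : Odd q) (hq7 : 7 ≤ q)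
    (m : ℤ) (hm : m = 0 ∨ m = 1)
    (e : ℤ) (he : (|e| : ℚ) < ((q / 2 : ℕ) : ℚ) / 2)
    (a : ℤ) (ha : a = ((m : ZMod q) * ((q / 2 : ℕ) : ZMod q) + (e : ZMod q)).valMinAbs) :
    round ((a : ℚ) / ((q / 2 : ℕ) : ℚ)) ≡ m [ZMOD 2] :=
  stmt_6_general q hodd m hm e he a ha
end

section
/- Let q be an odd prime, let m₁, m₂ ∈ {0,1}, and let e₁, e₂ be integers with |e₁| ≤ B and |e₂| ≤ B. Then there exists an integer e_add with |e_add| ≤ 2B + 1 such that, in ZMod q, (m₁ + m₂)·⌊q/2⌋ + e₁ + e₂ = (m₁ XOR m₂)·⌊q/2⌋ + e_add, where m₁ XOR m₂ denotes addition of the bits modulo 2. -/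
/-! Adding two bits gives their XOR plus twice their carry `m₁ m₂`, and since `2 ⌊q/2⌋ = q - 1 = -1`
in `ZMod q`, the carry term `m₁ m₂ · 2⌊q/2⌋` is just `-m₁ m₂`; it is absorbed into the noise
`e_add = e₁ + e₂ - m₁ m₂`, which costs at most `1` on top of `2B`. -/

theorem ZMod.two_mul_natCast_div_two_of_odd {n : ℕ} (hn : Odd n) :
    (2 : ZMod n) * ((n / 2 : ℕ) : ZMod n) = -1 := by
  have hsucc : 2 * (n / 2) + 1 = n := Nat.two_mul_div_two_add_one_of_odd hn
  have hzero : ((2 * (n / 2) + 1 : ℕ) : ZMod n) = 0 := by rw [hsucc, ZMod.natCast_self]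
  push_cast at hzero
  linear_combination hzero

theorem Int.add_eq_emod_two_add_two_mul_of_bits {a b : ℤ} (ha : a = 0 ∨ a = 1)
    (hb : b = 0 ∨ b = 1) : a + b = (a + b) % 2 + 2 * (a * b) := by
  rcases ha with rfl | rfl <;> rcases hb with rfl | rfl <;> norm_num

theorem abs_add_sub_le_of_abs_le {e₁ e₂ c B : ℤ} (he₁ : |e₁| ≤ B) (he₂ : |e₂| ≤ B)
    (hc₀ : 0 ≤ c) (hc₁ : c ≤ 1) : |e₁ + e₂ - c| ≤ 2 * B + 1 := by
  rw [abs_le] at *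
  constructor <;> linarith [he₁.1, he₁.2, he₂.1, he₂.2]

theorem stmt_7_general (q : ℕ) (hodd : Odd q)
    (m₁ m₂ : ℤ) (hm₁ : m₁ = 0 ∨ m₁ = 1) (hm₂ : m₂ = 0 ∨ m₂ = 1)
    (B : ℤ) (e₁ e₂ : ℤ) (he₁ : |e₁| ≤ B) (he₂ : |e₂| ≤ B) :
    ∃ eadd : ℤ, |eadd| ≤ 2 * B + 1 ∧
      ((m₁ + m₂ : ℤ) : ZMod q) * ((q / 2 : ℕ) : ZMod q) + (e₁ : ZMod q) + (e₂ : ZMod q) =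
        (((m₁ + m₂) % 2 : ℤ) : ZMod q) * ((q / 2 : ℕ) : ZMod q) + (eadd : ZMod q) := by
  obtain ⟨hcarry₀, hcarry₁⟩ : 0 ≤ m₁ * m₂ ∧ m₁ * m₂ ≤ 1 := by
    rcases hm₁ with rfl | rfl <;> rcases hm₂ with rfl | rfl <;> norm_num
  refine ⟨e₁ + e₂ - m₁ * m₂, abs_add_sub_le_of_abs_le he₁ he₂ hcarry₀ hcarry₁, ?_⟩
  nth_rw 1 [Int.add_eq_emod_two_add_two_mul_of_bits hm₁ hm₂]
  push_cast
  linear_combination ((m₁ : ZMod q) * m₂) * ZMod.two_mul_natCast_div_two_of_odd hodd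

/-- Homomorphic addition noise: for bits `m₁, m₂` and noises `e₁, e₂` bounded by `B`,
there is a noise `e_add` bounded by `2B + 1` such that in `ZMod q`,
`(m₁ + m₂)⌊q/2⌋ + e₁ + e₂ = (m₁ XOR m₂)⌊q/2⌋ + e_add`. -/
theorem stmt_7 (q : ℕ) (hq : q.Prime) [Fact q.Prime] (hodd : Odd q)
    (m₁ m₂ : ℤ) (hm₁ : m₁ = 0 ∨ m₁ = 1) (hm₂ : m₂ = 0 ∨ m₂ = 1)
    (B : ℤ) (hB : 0 ≤ B) (e₁ e₂ : ℤ) (he₁ : |e₁| ≤ B) (he₂ : |e₂| ≤ B) :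
    ∃ eadd : ℤ, |eadd| ≤ 2 * B + 1 ∧
      ((m₁ + m₂ : ℤ) : ZMod q) * ((q / 2 : ℕ) : ZMod q) + (e₁ : ZMod q) + (e₂ : ZMod q) =
        (((m₁ + m₂) % 2 : ℤ) : ZMod q) * ((q / 2 : ℕ) : ZMod q) + (eadd : ZMod q) :=
  stmt_7_general q hodd m₁ m₂ hm₁ hm₂ B e₁ e₂ he₁ he₂
end

section
/- Let q be an odd prime, set h = (q−1)/2, let B, K ≥ 0 be real numbers, let m₁, m₂ ∈ {0,1}, let e₁, e₂ be rationals with |e₁| ≤ 2B and |e₂| ≤ 2B, and let K₁, K₂ be integers with |K₁| ≤ K and |K₂| ≤ K. Then the multiplication noise E := (2/q)(m₁h + e₁ + qK₁)(m₂h + e₂ + qK₂) − m₁m₂h − q(m₁K₂ + m₂K₁ + 2K₁K₂) satisfies |E| ≤ 4B + 2(4B + 1)K + 8B²/q + 1. -/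
/-!
Write `xᵢ = mᵢh + eᵢ`. Since `2h = q − 1`, the cross terms `2qxᵢKⱼ` cancel against `q mᵢKⱼ` up to
`2eᵢKⱼ − mᵢKⱼ`, the term `2q K₁K₂` cancels exactly, and `(2/q)x₁x₂ − m₁m₂h` leaves
`−m₁m₂ h/q + (1 − 1/q)(m₁e₂ + m₂e₁) + 2e₁e₂/q`. Each of the five remaining terms is bounded by the
triangle inequality, using `0 ≤ h/q ≤ 1/2` and `0 ≤ 1 − 1/q ≤ 1` for `q ≥ 1`; the total is
`1/2 + 4B + 8B²/q + 8BK + 2K`.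
-/

theorem mul_noise_eq {F : Type*} [Field F] {q h : F} (hq : q ≠ 0) (hh : 2 * h = q - 1)
    (m₁ m₂ e₁ e₂ K₁ K₂ : F) :
    2 / q * ((m₁ * h + e₁ + q * K₁) * (m₂ * h + e₂ + q * K₂)) - m₁ * m₂ * h -
        q * (m₁ * K₂ + m₂ * K₁ + 2 * K₁ * K₂) =
      -(m₁ * m₂) * (h / q) + (1 - 1 / q) * (m₁ * e₂ + m₂ * e₁) + 2 * (e₁ * e₂) / q +
        2 * (e₁ * K₂ + e₂ * K₁) - (m₁ * K₂ + m₂ * K₁) := by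
  field_simp
  linear_combination (m₁ * m₂ * h + m₁ * e₂ + m₂ * e₁ + q * (m₁ * K₂ + m₂ * K₁)) * hh

section Abs

variable {α : Type*} [Ring α] [LinearOrder α] [IsOrderedRing α]

theorem abs_mul_le_of_le {a b A B : α} (ha : |a| ≤ A) (hb : |b| ≤ B) : |a * b| ≤ A * B :=
  (abs_mul a b).trans_le <| mul_le_mul ha hb (abs_nonneg b) ((abs_nonneg a).trans ha)

theorem abs_mul_add_mul_le_of_le {a b c d A B C D : α} (ha : |a| ≤ A) (hb : |b| ≤ B)
    (hc : |c| ≤ C) (hd : |d| ≤ D) : |a * b + c * d| ≤ A * B + C * D :=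
  (abs_add_le _ _).trans <| add_le_add (abs_mul_le_of_le ha hb) (abs_mul_le_of_le hc hd)

end Abs

theorem abs_mul_noise_le {q h m₁ m₂ e₁ e₂ K₁ K₂ B K : ℝ} (hq : 1 ≤ q) (hh : 2 * h = q - 1)
    (hm₁ : |m₁| ≤ 1) (hm₂ : |m₂| ≤ 1) (he₁ : |e₁| ≤ 2 * B) (he₂ : |e₂| ≤ 2 * B)
    (hK₁ : |K₁| ≤ K) (hK₂ : |K₂| ≤ K) :
    |-(m₁ * m₂) * (h / q) + (1 - 1 / q) * (m₁ * e₂ + m₂ * e₁) + 2 * (e₁ * e₂) / q +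
        2 * (e₁ * K₂ + e₂ * K₁) - (m₁ * K₂ + m₂ * K₁)| ≤
      1 / 2 + 4 * B + 8 * B ^ 2 / q + 8 * B * K + 2 * K := by
  have hq₀ : 0 < q := by linarith
  have hhq : |h / q| ≤ 1 / 2 := by
    rw [abs_of_nonneg (div_nonneg (by linarith) hq₀.le), div_le_iff₀ hq₀]
    linarith
  have hq' : |1 - 1 / q| ≤ 1 := by
    have : 1 / q ≤ 1 := (div_le_one hq₀).mpr hq
    rw [abs_le]
    constructor <;> linarith [one_div_pos.mpr hq₀]
  have t₁ := abs_le.mp <| abs_mul_le_of_le (abs_neg (m₁ * m₂) ▸ abs_mul_le_of_le hm₁ hm₂) hhq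
  have t₂ := abs_le.mp <| abs_mul_le_of_le hq' (abs_mul_add_mul_le_of_le hm₁ he₂ hm₂ he₁)
  have t₃ : |2 * (e₁ * e₂) / q| ≤ 8 * B ^ 2 / q := by
    rw [abs_div, abs_of_pos hq₀]
    gcongr
    calc |2 * (e₁ * e₂)| ≤ 2 * (2 * B * (2 * B)) :=
          abs_mul_le_of_le abs_two.le (abs_mul_le_of_le he₁ he₂)
      _ = 8 * B ^ 2 := by ring
  have t₄ := abs_le.mp <| abs_mul_le_of_le abs_two.le (abs_mul_add_mul_le_of_le he₁ hK₂ he₂ hK₁)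
  have t₅ := abs_le.mp <| abs_mul_add_mul_le_of_le hm₁ hK₂ hm₂ hK₁
  rw [abs_le] at t₃ ⊢
  constructor <;> linarith [t₁.1, t₁.2, t₂.1, t₂.2, t₃.1, t₃.2, t₄.1, t₄.2, t₅.1, t₅.2]

theorem abs_le_one_of_eq_zero_or_eq_one {m : ℤ} (hm : m = 0 ∨ m = 1) : |(m : ℝ)| ≤ 1 := by
  rcases hm with rfl | rfl <;> norm_num

theorem stmt_11_general (q : ℕ) (hodd : Odd q)
    (B K : ℝ)
    (m₁ m₂ : ℤ) (hm₁ : m₁ = 0 ∨ m₁ = 1) (hm₂ : m₂ = 0 ∨ m₂ = 1)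
    (e₁ e₂ : ℚ) (he₁ : |(e₁ : ℝ)| ≤ 2 * B) (he₂ : |(e₂ : ℝ)| ≤ 2 * B)
    (K₁ K₂ : ℤ) (hK₁ : |(K₁ : ℝ)| ≤ K) (hK₂ : |(K₂ : ℝ)| ≤ K)
    (h E : ℝ) (hh : h = ((q : ℝ) - 1) / 2)
    (hE : E = (2 / (q : ℝ)) * (((m₁ : ℝ) * h + (e₁ : ℝ) + (q : ℝ) * (K₁ : ℝ)) *
          ((m₂ : ℝ) * h + (e₂ : ℝ) + (q : ℝ) * (K₂ : ℝ))) -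
        (m₁ : ℝ) * (m₂ : ℝ) * h -
        (q : ℝ) * ((m₁ : ℝ) * (K₂ : ℝ) + (m₂ : ℝ) * (K₁ : ℝ) + 2 * (K₁ : ℝ) * (K₂ : ℝ))) :
    |E| ≤ 4 * B + 2 * (4 * B + 1) * K + 8 * B ^ 2 / (q : ℝ) + 1 := by
  have hq : (1 : ℝ) ≤ q := by exact_mod_cast hodd.pos
  have hh' : 2 * h = q - 1 := by rw [hh]; ring
  rw [hE, mul_noise_eq (one_pos.trans_le hq).ne' hh']
  have := abs_mul_noise_le hq hh' (abs_le_one_of_eq_zero_or_eq_one hm₁)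
    (abs_le_one_of_eq_zero_or_eq_one hm₂) he₁ he₂ hK₁ hK₂
  linarith

/-- Bound on the homomorphic multiplication noise: with `h = (q-1)/2`,
`|e₁|, |e₂| ≤ 2B`, `|K₁|, |K₂| ≤ K`, the noise
`E = (2/q)(m₁h + e₁ + qK₁)(m₂h + e₂ + qK₂) - m₁m₂h - q(m₁K₂ + m₂K₁ + 2K₁K₂)`
satisfies `|E| ≤ 4B + 2(4B+1)K + 8B²/q + 1`. -/
theorem stmt_11 (q : ℕ) (hq : q.Prime) (hodd : Odd q)
    (B K : ℝ) (hB : 0 ≤ B) (hK : 0 ≤ K)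
    (m₁ m₂ : ℤ) (hm₁ : m₁ = 0 ∨ m₁ = 1) (hm₂ : m₂ = 0 ∨ m₂ = 1)
    (e₁ e₂ : ℚ) (he₁ : |(e₁ : ℝ)| ≤ 2 * B) (he₂ : |(e₂ : ℝ)| ≤ 2 * B)
    (K₁ K₂ : ℤ) (hK₁ : |(K₁ : ℝ)| ≤ K) (hK₂ : |(K₂ : ℝ)| ≤ K)
    (h E : ℝ) (hh : h = ((q : ℝ) - 1) / 2)
    (hE : E = (2 / (q : ℝ)) * (((m₁ : ℝ) * h + (e₁ : ℝ) + (q : ℝ) * (K₁ : ℝ)) *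
          ((m₂ : ℝ) * h + (e₂ : ℝ) + (q : ℝ) * (K₂ : ℝ))) -
        (m₁ : ℝ) * (m₂ : ℝ) * h -
        (q : ℝ) * ((m₁ : ℝ) * (K₂ : ℝ) + (m₂ : ℝ) * (K₁ : ℝ) + 2 * (K₁ : ℝ) * (K₂ : ℝ))) :
    |E| ≤ 4 * B + 2 * (4 * B + 1) * K + 8 * B ^ 2 / (q : ℝ) + 1 :=
  stmt_11_general q hodd B K m₁ m₂ hm₁ hm₂ e₁ e₂ he₁ he₂ K₁ K₂ hK₁ hK₂ h E hh hE
end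

section
/- Let q be a prime and d, ℓ natural numbers. For an ℓ × d matrix A over ZMod q, define the statistical distance Δ(A) := (1/2) · Σ_{y : Fin ℓ → ZMod q} | (the number of x : Fin d → {0,1} with A.mulVec x = y) / 2^d − 1 / q^ℓ |, a real number. Then: (1) the average of Δ(A) over all ℓ × d matrices A over ZMod q (i.e., (1/q^{ℓd}) Σ_A Δ(A)) is at most √(q^ℓ / 2^d); and (2) the fraction of matrices A with Δ(A) > (q^ℓ / 2^d)^{1/4} is at most (q^ℓ / 2^d)^{1/4}. -/
open Matrix Finset

/-- 0-1 vector over `ZMod q`. -/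
def bvec (q d : ℕ) (x : Fin d → Bool) : Fin d → ZMod q := fun i => if x i then (1 : ZMod q) else 0

lemma cs_helper {ι : Type*} [Fintype ι] (g : ι → ℝ) (hg : ∀ i, 0 ≤ g i) :
    ∑ i, g i ≤ Real.sqrt ((Fintype.card ι : ℝ) * ∑ i, (g i) ^ 2) := by
  have h := Finset.sum_mul_sq_le_sq_mul_sq Finset.univ (fun _ => (1 : ℝ)) g
  simp only [one_mul, one_pow, Finset.sum_const, Finset.card_univ, nsmul_eq_mul, mul_one] at h
  have h0 : 0 ≤ ∑ i, g i := Finset.sum_nonneg fun i _ => hg i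
  rw [Real.le_sqrt h0 (by positivity)]
  exact h

section
variable (q : ℕ) [NeZero q] (d ℓ : ℕ)

lemma ker_card (hq : q.Prime) (v : Fin d → ZMod q) (hv : v ≠ 0) :
    Nat.card {r : Fin d → ZMod q // r ⬝ᵥ v = 0} = q ^ (d - 1) := by
  haveI : Fact q.Prime := ⟨hq⟩
  let φ : (Fin d → ZMod q) →ₗ[ZMod q] ZMod q :=
    { toFun := fun r => r ⬝ᵥ v
      map_add' := fun a b => add_dotProduct a b v
      map_smul' := fun c a => smul_dotProduct c a v }
  have hsurj : Function.Surjective φ := by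
    obtain ⟨i, hi⟩ : ∃ i, v i ≠ 0 := by
      by_contra h; push_neg at h; exact hv (funext h)
    intro c
    refine ⟨fun j => if j = i then c * (v i)⁻¹ else 0, ?_⟩
    simp only [φ, LinearMap.coe_mk, AddHom.coe_mk, dotProduct]
    rw [Finset.sum_eq_single i]
    · simp [mul_assoc, inv_mul_cancel₀ hi]
    · intro b _ hb; simp [hb]
    · simp
  have hrange : LinearMap.range φ = ⊤ := LinearMap.range_eq_top.2 hsurj
  have hrank := LinearMap.finrank_range_add_finrank_ker φ
  rw [hrange, finrank_top, Module.finrank_self] at hrank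
  have hkerrank : Module.finrank (ZMod q) (LinearMap.ker φ) = d - 1 := by
    rw [Module.finrank_pi, Fintype.card_fin] at hrank
    omega
  have : Nat.card (LinearMap.ker φ) = q ^ (d - 1) := by
    haveI : Fintype (LinearMap.ker φ) := Fintype.ofFinite _
    rw [Nat.card_eq_fintype_card, Module.card_eq_pow_finrank (K := ZMod q), ZMod.card, hkerrank]
  rw [← this]
  rfl

lemma mat_ker_card (hq : q.Prime) (v : Fin d → ZMod q) (hv : v ≠ 0) :
    Nat.card {A : Matrix (Fin ℓ) (Fin d) (ZMod q) // A.mulVec v = 0} = (q ^ (d - 1)) ^ ℓ := by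
  have e1 : {A : Matrix (Fin ℓ) (Fin d) (ZMod q) // A.mulVec v = 0} ≃
      ∀ _ : Fin ℓ, {r : Fin d → ZMod q // r ⬝ᵥ v = 0} := by
    refine (Equiv.subtypeEquivRight (fun A => ?_)).trans
      (Equiv.subtypePiEquivPi (p := fun (_ : Fin ℓ) (r : Fin d → ZMod q) => r ⬝ᵥ v = 0))
    constructor
    · intro h i; exact congrFun h i
    · intro h; funext i; exact h i
  rw [Nat.card_congr e1, Nat.card_pi]
  have := ker_card q d hq v hv
  rw [Nat.card_eq_fintype_card] at this
  simp [this]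

lemma card_matset (P : Matrix (Fin ℓ) (Fin d) (ZMod q) → Prop) [DecidablePred P] :
    ((Nat.card {A : Matrix (Fin ℓ) (Fin d) (ZMod q) // P A}) : ℝ) =
      ∑ A : Matrix (Fin ℓ) (Fin d) (ZMod q), if P A then (1 : ℝ) else 0 := by
  rw [Nat.card_eq_fintype_card, Fintype.card_subtype, Finset.card_filter]
  push_cast
  rfl

lemma card_mat : (Fintype.card (Matrix (Fin ℓ) (Fin d) (ZMod q)) : ℝ) = (q : ℝ) ^ (ℓ * d) := by
  have : Fintype.card (Matrix (Fin ℓ) (Fin d) (ZMod q)) = q ^ (ℓ * d) := by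
    have e : Matrix (Fin ℓ) (Fin d) (ZMod q) ≃ (Fin ℓ → Fin d → ZMod q) := Equiv.refl _
    rw [Fintype.card_congr e]
    simp [ZMod.card, ← pow_mul, Nat.mul_comm]
  rw [this]; push_cast; ring

variable (A : Matrix (Fin ℓ) (Fin d) (ZMod q))

lemma card_fiber (y : Fin ℓ → ZMod q) :
    ((Nat.card {x : Fin d → Bool // A.mulVec (bvec q d x) = y}) : ℝ) =
      ∑ x : Fin d → Bool, if A.mulVec (bvec q d x) = y then (1 : ℝ) else 0 := by
  classical
  rw [Nat.card_eq_fintype_card, Fintype.card_subtype, Finset.card_filter]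
  push_cast
  rfl

lemma sum1 :
    ∑ y : Fin ℓ → ZMod q, ((Nat.card {x : Fin d → Bool // A.mulVec (bvec q d x) = y}) : ℝ)
      = 2 ^ d := by
  classical
  simp_rw [card_fiber]
  rw [Finset.sum_comm]
  simp [Finset.sum_ite_eq]

lemma sum2 :
    ∑ y : Fin ℓ → ZMod q, ((Nat.card {x : Fin d → Bool // A.mulVec (bvec q d x) = y}) : ℝ) ^ 2
      = ∑ x : Fin d → Bool, ∑ x' : Fin d → Bool,
          if A.mulVec (bvec q d x) = A.mulVec (bvec q d x') then (1 : ℝ) else 0 := by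
  classical
  simp_rw [card_fiber, sq, Finset.sum_mul_sum]
  rw [Finset.sum_comm]
  refine Finset.sum_congr rfl fun x _ => ?_
  rw [Finset.sum_comm]
  refine Finset.sum_congr rfl fun x' _ => ?_
  simp only [ite_mul, one_mul, zero_mul]
  rw [Finset.sum_ite_eq]
  simp [eq_comm]

lemma pair_bound (hq : q.Prime) (x x' : Fin d → Bool) :
    ∑ B : Matrix (Fin ℓ) (Fin d) (ZMod q),
        (if B.mulVec (bvec q d x) = B.mulVec (bvec q d x') then (1 : ℝ) else 0)
      ≤ (q : ℝ) ^ (ℓ * d) * ((if x = x' then (1 : ℝ) else 0) + 1 / (q : ℝ) ^ ℓ) := by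
  classical
  haveI : Fact q.Prime := ⟨hq⟩
  have hq0 : (0 : ℝ) < (q : ℝ) := by exact_mod_cast hq.pos
  by_cases hxx : x = x'
  · subst hxx
    have h1 : ∑ B : Matrix (Fin ℓ) (Fin d) (ZMod q),
        (if B.mulVec (bvec q d x) = B.mulVec (bvec q d x) then (1 : ℝ) else 0)
        = (q : ℝ) ^ (ℓ * d) := by
      simp only [if_pos rfl, if_true, Finset.sum_const, Finset.card_univ, nsmul_eq_mul, mul_one]
      exact card_mat q d ℓ
    rw [h1, if_pos rfl]
    nlinarith [mul_pos (pow_pos hq0 (ℓ * d)) (show (0:ℝ) < 1/(q:ℝ)^ℓ by positivity)]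
  · rw [if_neg hxx]
    obtain ⟨i, hi⟩ := Function.ne_iff.1 hxx
    have hv : bvec q d x - bvec q d x' ≠ 0 := by
      intro h
      have := congrFun h i
      simp only [Pi.sub_apply, Pi.zero_apply, bvec, sub_eq_zero] at this
      rcases hx : x i <;> rcases hx' : x' i <;> rw [hx, hx'] at this <;> simp_all
    have heq : ∀ B : Matrix (Fin ℓ) (Fin d) (ZMod q),
        (B.mulVec (bvec q d x) = B.mulVec (bvec q d x')) ↔
          B.mulVec (bvec q d x - bvec q d x') = 0 := by
      intro B; rw [Matrix.mulVec_sub, sub_eq_zero]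
    have hcount : ∑ B : Matrix (Fin ℓ) (Fin d) (ZMod q),
        (if B.mulVec (bvec q d x) = B.mulVec (bvec q d x') then (1 : ℝ) else 0)
        = ((q : ℝ) ^ (d - 1)) ^ ℓ := by
      simp_rw [heq]
      rw [← card_matset q d ℓ (fun B => B.mulVec (bvec q d x - bvec q d x') = 0),
        mat_ker_card q d ℓ hq _ hv]
      push_cast
      ring
    rw [hcount]
    have hd : d ≠ 0 := by rintro rfl; exact i.elim0
    obtain ⟨e, rfl⟩ : ∃ e, d = e + 1 := ⟨d - 1, by omega⟩
    have key : ((q:ℝ) ^ (e + 1 - 1)) ^ ℓ * (q:ℝ) ^ ℓ = (q:ℝ) ^ (ℓ * (e + 1)) := by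
      simp only [Nat.add_sub_cancel]
      rw [← pow_mul, ← pow_add]
      congr 1
      ring
    have hql : (0:ℝ) < (q:ℝ) ^ ℓ := pow_pos hq0 ℓ
    rw [zero_add, mul_one_div, le_div_iff₀ hql]
    exact le_of_eq key

lemma coll_bound (hq : q.Prime) :
    ∑ B : Matrix (Fin ℓ) (Fin d) (ZMod q), ∑ y : Fin ℓ → ZMod q,
        ((Nat.card {x : Fin d → Bool // B.mulVec (bvec q d x) = y}) : ℝ) ^ 2
      ≤ (q : ℝ) ^ (ℓ * d) * ((2:ℝ) ^ d + ((2:ℝ) ^ d) ^ 2 / (q : ℝ) ^ ℓ) := by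
  classical
  simp_rw [sum2]
  have hcard2 : (Fintype.card (Fin d → Bool) : ℝ) = 2 ^ d := by simp
  calc ∑ B : Matrix (Fin ℓ) (Fin d) (ZMod q), ∑ x : Fin d → Bool, ∑ x' : Fin d → Bool,
          (if B.mulVec (bvec q d x) = B.mulVec (bvec q d x') then (1 : ℝ) else 0)
      ≤ ∑ x : Fin d → Bool, ∑ x' : Fin d → Bool,
          (q : ℝ) ^ (ℓ * d) * ((if x = x' then (1 : ℝ) else 0) + 1 / (q : ℝ) ^ ℓ) := by
        rw [Finset.sum_comm]
        refine Finset.sum_le_sum fun x _ => ?_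
        rw [Finset.sum_comm]
        exact Finset.sum_le_sum fun x' _ => pair_bound q d ℓ hq x x'
    _ = (q : ℝ) ^ (ℓ * d) * ((2:ℝ) ^ d + ((2:ℝ) ^ d) ^ 2 / (q : ℝ) ^ ℓ) := by
        simp only [mul_add, Finset.sum_add_distrib]
        have e1 : ∑ x : Fin d → Bool, ∑ x' : Fin d → Bool,
            (q : ℝ) ^ (ℓ * d) * (if x = x' then (1:ℝ) else 0) = (q : ℝ) ^ (ℓ * d) * 2 ^ d := by
          simp only [mul_ite, mul_one, mul_zero, Finset.sum_ite_eq, Finset.mem_univ, if_true]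
          rw [Finset.sum_const, Finset.card_univ, nsmul_eq_mul, hcard2]
          ring
        have e2 : ∑ _x : Fin d → Bool, ∑ _x' : Fin d → Bool,
            (q : ℝ) ^ (ℓ * d) * (1 / (q : ℝ) ^ ℓ) =
            2 ^ d * (2 ^ d * ((q : ℝ) ^ (ℓ * d) * (1 / (q : ℝ) ^ ℓ))) := by
          rw [Finset.sum_const, Finset.sum_const, Finset.card_univ, nsmul_eq_mul, nsmul_eq_mul,
            hcard2]
        rw [e1, e2]
        ring
end


/-- The statistical distance from uniform of the distribution of `A x` where `x` is a uniform
random 0-1 vector: `Δ(A) = (1/2) ∑_y |#{x ∈ {0,1}^d : A x = y} / 2^d - 1/q^ℓ|`. -/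
noncomputable def statDist (q d ℓ : ℕ) [NeZero q]
    (A : Matrix (Fin ℓ) (Fin d) (ZMod q)) : ℝ :=
  (1 / 2) * ∑ y : Fin ℓ → ZMod q,
    |((Nat.card {x : Fin d → Bool //
        A.mulVec (fun i => if x i then (1 : ZMod q) else 0) = y}) : ℝ) / 2 ^ d -
      1 / (q : ℝ) ^ ℓ|

/-- Leftover hash lemma (Claim 5.3 of Regev): on average over `ℓ × d` matrices `A` over
`ZMod q`, the statistical distance `Δ(A)` is at most `√(q^ℓ/2^d)`, and the fraction of
matrices with `Δ(A) > (q^ℓ/2^d)^{1/4}` is at most `(q^ℓ/2^d)^{1/4}`. -/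
theorem stmt_14 (q : ℕ) (hq : q.Prime) [NeZero q] (d ℓ : ℕ) :
    ((1 : ℝ) / (q : ℝ) ^ (ℓ * d)) *
        (∑ A : Matrix (Fin ℓ) (Fin d) (ZMod q), statDist q d ℓ A) ≤
      Real.sqrt ((q : ℝ) ^ ℓ / 2 ^ d) ∧
    ((Nat.card {A : Matrix (Fin ℓ) (Fin d) (ZMod q) //
          ((q : ℝ) ^ ℓ / 2 ^ d) ^ ((1 : ℝ) / 4) < statDist q d ℓ A}) : ℝ) /
        (q : ℝ) ^ (ℓ * d) ≤
      ((q : ℝ) ^ ℓ / 2 ^ d) ^ ((1 : ℝ) / 4) := by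
  classical
  have hq0 : (0 : ℝ) < (q : ℝ) := by exact_mod_cast hq.pos
  set Q : ℝ := (q : ℝ) ^ (ℓ * d) with hQdef
  set K : ℝ := (2 : ℝ) ^ d with hKdef
  set qe : ℝ := (q : ℝ) ^ ℓ with hqedef
  set u : ℝ := 1 / qe with hudef
  have hQpos : 0 < Q := pow_pos hq0 _
  have hKpos : 0 < K := by positivity
  have hqepos : 0 < qe := pow_pos hq0 _
  set g : Matrix (Fin ℓ) (Fin d) (ZMod q) → (Fin ℓ → ZMod q) → ℝ :=
    fun A y => ((Nat.card {x : Fin d → Bool // A.mulVec (bvec q d x) = y}) : ℝ) with hgdef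
  have hsd : ∀ A, statDist q d ℓ A = (1 / 2) * ∑ y, |g A y / K - u| := fun A => rfl
  have hsd_nonneg : ∀ A, 0 ≤ statDist q d ℓ A := by
    intro A
    rw [hsd A]
    positivity
  set S : Matrix (Fin ℓ) (Fin d) (ZMod q) → ℝ := fun A => ∑ y, (g A y / K - u) ^ 2 with hSdef
  have hS_nonneg : ∀ A, 0 ≤ S A := fun A => Finset.sum_nonneg fun y _ => sq_nonneg _
  have hcardy : (Fintype.card (Fin ℓ → ZMod q) : ℝ) = qe := by
    simp [hqedef, ZMod.card]
  have hS_eq : ∀ A, S A = (∑ y, g A y ^ 2) / K ^ 2 - u := by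
    intro A
    have hsum1 : ∑ y, g A y = K := sum1 q d ℓ A
    have hexp : ∀ y : Fin ℓ → ZMod q,
        (g A y / K - u) ^ 2 = g A y ^ 2 / K ^ 2 - (2 * u / K) * g A y + u ^ 2 := by
      intro y
      field_simp
      ring
    calc S A = ∑ y, (g A y ^ 2 / K ^ 2 - (2 * u / K) * g A y + u ^ 2) := by
          rw [hSdef]; exact Finset.sum_congr rfl fun y _ => hexp y
      _ = (∑ y, g A y ^ 2) / K ^ 2 - (2 * u / K) * K + qe * u ^ 2 := by
          rw [Finset.sum_add_distrib, Finset.sum_sub_distrib, ← Finset.mul_sum, hsum1,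
            Finset.sum_const, Finset.card_univ, nsmul_eq_mul, hcardy, Finset.sum_div]
      _ = (∑ y, g A y ^ 2) / K ^ 2 - u := by
          rw [hudef]
          field_simp
          ring
  have hsumS : ∑ A, S A ≤ Q / K := by
    have hcoll := coll_bound q d ℓ hq
    have hcA : (Fintype.card (Matrix (Fin ℓ) (Fin d) (ZMod q)) : ℝ) = Q := card_mat q d ℓ
    calc ∑ A, S A = (∑ A, ∑ y, g A y ^ 2) / K ^ 2 - Q * u := by
          simp_rw [hS_eq]
          rw [Finset.sum_sub_distrib, Finset.sum_const, Finset.card_univ, nsmul_eq_mul, hcA,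
            ← Finset.sum_div]
      _ ≤ (Q * (K + K ^ 2 * u)) / K ^ 2 - Q * u := by
          have h2 : (∑ A, ∑ y, g A y ^ 2) ≤ Q * (K + K ^ 2 * u) := by
            refine hcoll.trans_eq ?_
            rw [hudef, hKdef, hqedef, hQdef]
            field_simp
          gcongr
      _ = Q / K := by field_simp; ring
  have hΔ : ∀ A, statDist q d ℓ A ≤ (1 / 2) * Real.sqrt (qe * S A) := by
    intro A
    rw [hsd A]
    have hcs := cs_helper (fun y => |g A y / K - u|) (fun y => abs_nonneg _)
    simp_rw [sq_abs, hcardy] at hcs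
    have : ∑ y, |g A y / K - u| ≤ Real.sqrt (qe * S A) := hcs
    linarith
  have hsum_sqrt : ∑ A, Real.sqrt (S A) ≤ Real.sqrt (Q * (Q / K)) := by
    have hcs := cs_helper (fun A : Matrix (Fin ℓ) (Fin d) (ZMod q) => Real.sqrt (S A))
      (fun A => Real.sqrt_nonneg _)
    have hsq : ∀ A : Matrix (Fin ℓ) (Fin d) (ZMod q), Real.sqrt (S A) ^ 2 = S A :=
      fun A => Real.sq_sqrt (hS_nonneg A)
    simp_rw [hsq, card_mat q d ℓ] at hcs
    exact hcs.trans (Real.sqrt_le_sqrt (mul_le_mul_of_nonneg_left hsumS hQpos.le))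
  have hmain : ∑ A, statDist q d ℓ A ≤ Q * Real.sqrt (qe / K) := by
    have hQK : Real.sqrt (Q * (Q / K)) = Q * Real.sqrt (1 / K) := by
      rw [show Q * (Q / K) = Q ^ 2 * (1 / K) by field_simp,
        Real.sqrt_mul (sq_nonneg Q), Real.sqrt_sq hQpos.le]
    calc ∑ A, statDist q d ℓ A ≤ ∑ A, (1 / 2) * Real.sqrt (qe * S A) :=
          Finset.sum_le_sum fun A _ => hΔ A
      _ = (1 / 2) * (Real.sqrt qe * ∑ A, Real.sqrt (S A)) := by
          simp_rw [Real.sqrt_mul hqepos.le]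
          rw [Finset.mul_sum, Finset.mul_sum]
      _ ≤ (1 / 2) * (Real.sqrt qe * Real.sqrt (Q * (Q / K))) := by
          have h0 : (0:ℝ) ≤ Real.sqrt qe := Real.sqrt_nonneg _
          nlinarith [hsum_sqrt, Finset.sum_nonneg
            (fun A (_ : A ∈ Finset.univ) => Real.sqrt_nonneg (S A))]
      _ = (1 / 2) * (Q * Real.sqrt (qe / K)) := by
          have hm : Real.sqrt qe * Real.sqrt (1 / K) = Real.sqrt (qe / K) := by
            rw [← Real.sqrt_mul hqepos.le, mul_one_div]
          rw [hQK, ← hm]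
          ring
      _ ≤ Q * Real.sqrt (qe / K) := by
          nlinarith [Real.sqrt_nonneg (qe / K), hQpos]
  constructor
  · calc (1 / Q) * ∑ A, statDist q d ℓ A ≤ (1 / Q) * (Q * Real.sqrt (qe / K)) := by
          have h1Q : (0:ℝ) ≤ 1 / Q := by positivity
          exact mul_le_mul_of_nonneg_left hmain h1Q
      _ = Real.sqrt (qe / K) := by field_simp
  · set t : ℝ := (qe / K) ^ ((1 : ℝ) / 4) with htdef
    have heK : (0:ℝ) < qe / K := by positivity
    have ht0 : 0 < t := Real.rpow_pos_of_pos heK _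
    have hcard : ((Nat.card {A : Matrix (Fin ℓ) (Fin d) (ZMod q) //
        t < statDist q d ℓ A}) : ℝ) = ∑ A, if t < statDist q d ℓ A then (1:ℝ) else 0 :=
      card_matset q d ℓ _
    have hmarkov : t * ((Nat.card {A : Matrix (Fin ℓ) (Fin d) (ZMod q) //
        t < statDist q d ℓ A}) : ℝ) ≤ Q * Real.sqrt (qe / K) := by
      rw [hcard, Finset.mul_sum]
      refine (Finset.sum_le_sum fun A _ => ?_).trans hmain
      by_cases h : t < statDist q d ℓ A
      · rw [if_pos h, mul_one]; exact h.le
      · rw [if_neg h, mul_zero]; exact hsd_nonneg A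
    have hsqrt_rpow : Real.sqrt (qe / K) = (qe / K) ^ ((1:ℝ)/2) := Real.sqrt_eq_rpow _
    have hdiv : Real.sqrt (qe / K) / t = t := by
      rw [hsqrt_rpow, htdef, ← Real.rpow_sub heK]
      norm_num
    have hcard_nonneg : (0:ℝ) ≤ ((Nat.card {A : Matrix (Fin ℓ) (Fin d) (ZMod q) //
        t < statDist q d ℓ A}) : ℝ) := Nat.cast_nonneg _
    rw [div_le_iff₀ hQpos]
    calc ((Nat.card {A : Matrix (Fin ℓ) (Fin d) (ZMod q) //
          t < statDist q d ℓ A}) : ℝ) ≤ Q * Real.sqrt (qe / K) / t := by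
          rw [le_div_iff₀ ht0]
          linarith [hmarkov]
      _ = t * Q := by
          rw [mul_div_assoc, hdiv]; ring
end
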